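/- arXiv:1811.04852 — 4 statements merged into one kernel-verified Lean document; each statement's English description precedes it below -/
import Mathlib

section
/- Let X and Y be positive semidefinite matrices in C^{n×n} with max(rank(X), rank(Y)) = k. Then ||X - Y||_F ≤ (2k)^{1/4} · ||X² - Y²||_F^{1/2}, where ||·||_F denotes the Frobenius norm. -/
open Matrix Finset
open scoped ComplexOrder

noncomputable def frob {m n : ℕ} (M : Matrix (Fin m) (Fin n) ℂ) : ℝ :=
  Real.sqrt (∑ i, ∑ j, ‖M i j‖ ^ 2)

noncomputable def spec {m n : ℕ} (M : Matrix (Fin m) (Fin n) ℂ) : ℝ :=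
  ‖LinearMap.toContinuousLinearMap (Matrix.toEuclideanLin M)‖

def IsMoorePenrose {m n : ℕ} (M : Matrix (Fin m) (Fin n) ℂ) (G : Matrix (Fin n) (Fin m) ℂ) : Prop :=
  M * G * M = M ∧ G * M * G = G ∧ (M * G)ᴴ = M * G ∧ (G * M)ᴴ = G * M

noncomputable def enorm {n : ℕ} (x : Fin n → ℂ) : ℝ := Real.sqrt (∑ i, ‖x i‖ ^ 2)

/-!
Diagonalise the Hermitian matrix `X - Y = U diag(d) Uᴴ`. Since
`2 (X² - Y²) = (X - Y)(X + Y) + (X + Y)(X - Y)`, in the basis `U` the diagonal entries of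
`X² - Y²` are `dᵢ (aᵢ + bᵢ)`, where `aᵢ, bᵢ ≥ 0` are the diagonal entries of `X` and `Y` and
`dᵢ = aᵢ - bᵢ`; hence `dᵢ² ≤ |(X² - Y²)ᵢᵢ|`. Summing over the `rank (X - Y) ≤ 2k` nonzero `dᵢ`
and applying Cauchy–Schwarz gives `‖X - Y‖_F⁴ ≤ 2k ‖X² - Y²‖_F²`.
-/

lemma frob_nonneg {m n : ℕ} (M : Matrix (Fin m) (Fin n) ℂ) : 0 ≤ frob M := Real.sqrt_nonneg _

lemma frob_sq {m n : ℕ} (M : Matrix (Fin m) (Fin n) ℂ) :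
    frob M ^ 2 = ∑ i, ∑ j, ‖M i j‖ ^ 2 :=
  Real.sq_sqrt (by positivity)

lemma frob_sq_eq_re_trace {m n : ℕ} (M : Matrix (Fin m) (Fin n) ℂ) :
    frob M ^ 2 = (Mᴴ * M).trace.re := by
  rw [frob_sq, Finset.sum_comm]
  simp [Matrix.trace, Matrix.mul_apply, Complex.re_sum, ← Complex.normSq_eq_norm_sq,
    Complex.normSq_apply]

lemma frob_unitary_conj {n : ℕ} (U : unitary (Matrix (Fin n) (Fin n) ℂ))
    (M : Matrix (Fin n) (Fin n) ℂ) :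
    frob (Unitary.conjStarAlgAut ℂ _ U M) = frob M := by
  have hU : (star U : Matrix (Fin n) (Fin n) ℂ) * U = 1 := Unitary.coe_star_mul_self U
  rw [← sq_eq_sq₀ (frob_nonneg _) (frob_nonneg _), frob_sq_eq_re_trace, frob_sq_eq_re_trace,
    Unitary.conjStarAlgAut_apply, ← star_eq_conjTranspose, ← star_eq_conjTranspose, star_mul,
    star_mul, star_star]
  simp only [mul_assoc, ← mul_assoc (star (U : Matrix (Fin n) (Fin n) ℂ)) U, hU, one_mul]
  rw [trace_mul_comm]
  simp only [mul_assoc, hU, mul_one]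

lemma frob_diagonal_sq {n : ℕ} (c : Fin n → ℂ) :
    frob (diagonal c) ^ 2 = ∑ i, ‖c i‖ ^ 2 := by
  rw [frob_sq]
  refine Finset.sum_congr rfl fun i _ => ?_
  rw [Finset.sum_eq_single i (fun j _ hj => by simp [diagonal_apply_ne _ hj.symm]) (by simp)]
  simp

lemma sum_norm_diag_sq_le_frob_sq {n : ℕ} (M : Matrix (Fin n) (Fin n) ℂ) (s : Finset (Fin n)) :
    ∑ i ∈ s, ‖M i i‖ ^ 2 ≤ frob M ^ 2 := by
  rw [frob_sq]
  calc ∑ i ∈ s, ‖M i i‖ ^ 2 ≤ ∑ i ∈ s, ∑ j, ‖M i j‖ ^ 2 :=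
        Finset.sum_le_sum fun i _ =>
          Finset.single_le_sum (f := fun j => ‖M i j‖ ^ 2) (fun _ _ => sq_nonneg _) (mem_univ i)
    _ ≤ ∑ i, ∑ j, ‖M i j‖ ^ 2 :=
        Finset.sum_le_sum_of_subset_of_nonneg (subset_univ s) fun _ _ _ => by positivity

theorem Matrix.rank_sub_le {m n K : Type*} [Fintype n] [Field K] (A B : Matrix m n K) :
    (A - B).rank ≤ A.rank + B.rank := by
  have hrange : LinearMap.range (A - B).mulVecLin ≤
      LinearMap.range A.mulVecLin ⊔ LinearMap.range B.mulVecLin := by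
    rintro _ ⟨x, rfl⟩
    rw [mulVecLin_apply, sub_mulVec]
    exact sub_mem (Submodule.mem_sup_left ⟨x, rfl⟩) (Submodule.mem_sup_right ⟨x, rfl⟩)
  exact (Submodule.finrank_mono hrange).trans (Submodule.finrank_add_le_finrank_add_finrank _ _)

lemma sq_le_norm_mul_self_sub_mul_self_diag {𝕜 n : Type*} [RCLike 𝕜] [Fintype n] [DecidableEq n]
    {A B : Matrix n n 𝕜} (hA : A.PosSemidef) (hB : B.PosSemidef) {d : n → ℝ}
    (h : A - B = diagonal (RCLike.ofReal ∘ d)) (i : n) :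
    d i ^ 2 ≤ ‖(A * A - B * B) i i‖ := by
  have hsym : (A * A - B * B) + (A * A - B * B) = (A - B) * (A + B) + (A + B) * (A - B) := by
    noncomm_ring
  have hentry : (A * A - B * B) i i = d i * (A i i + B i i) := by
    have := congrFun (congrFun hsym i) i
    simp only [Matrix.add_apply, h, diagonal_mul, mul_diagonal, Function.comp_apply] at this
    linear_combination (1 / 2 : 𝕜) * this
  obtain ⟨a, ha, hai⟩ := RCLike.nonneg_iff_exists_ofReal.mp (hA.diag_nonneg (i := i))
  obtain ⟨b, hb, hbi⟩ := RCLike.nonneg_iff_exists_ofReal.mp (hB.diag_nonneg (i := i))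
  have hd : d i = a - b := by
    have := congrFun (congrFun h i) i
    rw [Matrix.sub_apply, ← hai, ← hbi, diagonal_apply_eq] at this
    simp only [Function.comp_apply] at this
    exact_mod_cast this.symm
  rw [hentry, ← hai, ← hbi, hd, ← RCLike.ofReal_add, ← RCLike.ofReal_mul, RCLike.norm_ofReal,
    abs_mul, abs_of_nonneg (add_nonneg ha hb), ← sq_abs, sq]
  exact mul_le_mul_of_nonneg_left (abs_sub_le_iff.mpr ⟨by linarith, by linarith⟩) (abs_nonneg _)

lemma frob_sub_pow_four_le_of_sub_eq_diagonal {n : ℕ} {A B : Matrix (Fin n) (Fin n) ℂ}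
    (hA : A.PosSemidef) (hB : B.PosSemidef) {d : Fin n → ℝ}
    (h : A - B = diagonal (RCLike.ofReal ∘ d)) :
    frob (A - B) ^ 4 ≤ #{i | d i ≠ 0} * frob (A * A - B * B) ^ 2 := by
  set s : Finset (Fin n) := {i | d i ≠ 0}
  set M := A * A - B * B
  have hfrob : frob (A - B) ^ 2 = ∑ i ∈ s, d i ^ 2 := by
    rw [h, frob_diagonal_sq]
    simp only [Function.comp_apply, RCLike.norm_ofReal, sq_abs]
    exact (Finset.sum_filter_of_ne (p := (d · ≠ 0)) fun _ _ hi hdi => hi (by rw [hdi]; ring)).symm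
  calc frob (A - B) ^ 4 = (∑ i ∈ s, d i ^ 2) ^ 2 := by rw [← hfrob]; ring
    _ ≤ (∑ i ∈ s, ‖M i i‖) ^ 2 := by
        gcongr with i
        exact sq_le_norm_mul_self_sub_mul_self_diag hA hB h i
    _ ≤ #s * ∑ i ∈ s, ‖M i i‖ ^ 2 := sq_sum_le_card_mul_sum_sq
    _ ≤ #s * frob M ^ 2 := by
        gcongr
        exact sum_norm_diag_sq_le_frob_sq M s

theorem frob_sub_pow_four_le_rank_mul {n : ℕ} {X Y : Matrix (Fin n) (Fin n) ℂ}
    (hX : X.PosSemidef) (hY : Y.PosSemidef) :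
    frob (X - Y) ^ 4 ≤ (X - Y).rank * frob (X * X - Y * Y) ^ 2 := by
  have hD : (X - Y).IsHermitian := hX.1.sub hY.1
  let φ := Unitary.conjStarAlgAut ℂ (Matrix (Fin n) (Fin n) ℂ) (star hD.eigenvectorUnitary)
  have hdiag : φ X - φ Y = diagonal (RCLike.ofReal ∘ hD.eigenvalues) := by
    rw [← map_sub]
    exact hD.conjStarAlgAut_star_eigenvectorUnitary
  have hφ {Z : Matrix (Fin n) (Fin n) ℂ} (hZ : Z.PosSemidef) : (φ Z).PosSemidef :=
    hZ.mul_mul_conjTranspose_same (star hD.eigenvectorUnitary : Matrix (Fin n) (Fin n) ℂ)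
  have key := frob_sub_pow_four_le_of_sub_eq_diagonal (hφ hX) (hφ hY) hdiag
  rw [← map_sub, ← map_mul, ← map_mul, ← map_sub, frob_unitary_conj, frob_unitary_conj] at key
  rwa [hD.rank_eq_card_non_zero_eigs, Fintype.card_subtype]

lemma le_rpow_one_div_four_mul_sqrt_of_pow_four_le {x c F : ℝ} (hx : 0 ≤ x) (hc : 0 ≤ c)
    (hF : 0 ≤ F) (h : x ^ 4 ≤ c * F ^ 2) : x ≤ c ^ ((1 : ℝ) / 4) * Real.sqrt F := by
  have hpow : (c ^ ((1 : ℝ) / 4) * Real.sqrt F) ^ 4 = c * F ^ 2 := by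
    rw [mul_pow, ← Real.rpow_natCast (c ^ _), ← Real.rpow_mul hc,
      show (4 : ℕ) = 2 * 2 from rfl, pow_mul, Real.sq_sqrt hF]
    norm_num
  rwa [← pow_le_pow_iff_left₀ hx (by positivity) four_ne_zero, hpow]

theorem stmt0 {n k : ℕ} (X Y : Matrix (Fin n) (Fin n) ℂ)
    (hX : X.PosSemidef) (hY : Y.PosSemidef)
    (hk : max X.rank Y.rank = k) :
    frob (X - Y) ≤ ((2 * k : ℝ) ^ ((1 : ℝ) / 4)) * Real.sqrt (frob (X * X - Y * Y)) := by
  have hrank : (X - Y).rank ≤ 2 * k := by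
    have := Matrix.rank_sub_le X Y
    omega
  refine le_rpow_one_div_four_mul_sqrt_of_pow_four_le (frob_nonneg _) (by positivity)
    (frob_nonneg _) ?_
  calc frob (X - Y) ^ 4 ≤ (X - Y).rank * frob (X * X - Y * Y) ^ 2 :=
        frob_sub_pow_four_le_rank_mul hX hY
    _ ≤ 2 * k * frob (X * X - Y * Y) ^ 2 := by
        gcongr
        exact_mod_cast hrank
end

section
/- Let x, y ∈ C^n be nonzero vectors with ||x - y|| ≤ ε. Then the total variation distance between the distributions D_x and D_y satisfies ||D_x, D_y||_TV ≤ 2ε/||x||, where D_x(i) = |x(i)|²/||x||². -/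
open Matrix Finset
open scoped ComplexOrder

noncomputable def enorm' {n : ℕ} (x : Fin n → ℂ) : ℝ := Real.sqrt (∑ i, ‖x i‖ ^ 2)

/-!
With `u = x / ‖x‖` and `v = y / ‖y‖`, each term `|u i|² - |v i|²` factors as
`(|u i| + |v i|)(|u i| - |v i|)`, so Cauchy–Schwarz bounds the total variation distance by
`‖u - v‖`; and `‖u - v‖ ≤ 2‖x - y‖ / ‖x‖` by the triangle inequality.
-/

namespace NormedSpace

variable {V : Type*} [NormedAddCommGroup V] [NormedSpace ℝ V]

theorem norm_normalize_le_one (y : V) : ‖normalize y‖ ≤ 1 := by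
  by_cases hy : y = 0
  · simp [hy]
  · exact (norm_normalize hy).le

theorem norm_normalize_sub_normalize_le {x : V} (hx : x ≠ 0) (y : V) :
    ‖normalize x - normalize y‖ ≤ 2 * ‖x - y‖ / ‖x‖ := by
  have hxpos : 0 < ‖x‖ := norm_pos_iff.mpr hx
  have hdecomp : normalize x - normalize y =
      ‖x‖⁻¹ • (x - y) + (‖x‖⁻¹ * (‖y‖ - ‖x‖)) • normalize y := by
    rw [mul_smul, sub_smul, norm_smul_normalize, smul_sub, smul_sub, normalize, normalize,
      smul_smul, inv_mul_cancel₀ hxpos.ne', one_smul]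
    abel
  calc ‖normalize x - normalize y‖
      ≤ ‖x‖⁻¹ * ‖x - y‖ + ‖x‖⁻¹ * |‖y‖ - ‖x‖| * ‖normalize y‖ := by
        rw [hdecomp]
        refine (norm_add_le _ _).trans_eq ?_
        rw [norm_smul, norm_smul, Real.norm_eq_abs, Real.norm_eq_abs, abs_mul,
          abs_inv, abs_norm]
    _ ≤ ‖x‖⁻¹ * ‖x - y‖ + ‖x‖⁻¹ * ‖x - y‖ * 1 := by
        gcongr
        · rw [norm_sub_rev x y]; exact abs_norm_sub_norm_le y x
        · exact norm_normalize_le_one y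
    _ = 2 * ‖x - y‖ / ‖x‖ := by ring

end NormedSpace

namespace PiLp

variable {ι : Type*} [Fintype ι] {β : ι → Type*}

theorem sum_norm_mul_norm_le [∀ i, SeminormedAddCommGroup (β i)]
    (u w : PiLp 2 β) : ∑ i, ‖u i‖ * ‖w i‖ ≤ ‖u‖ * ‖w‖ := by
  rw [norm_eq_of_L2 u, norm_eq_of_L2 w]
  exact Real.sum_mul_le_sqrt_mul_sqrt _ _ _

theorem sum_abs_norm_sq_sub_norm_sq_le [∀ i, SeminormedAddCommGroup (β i)]
    (u v : PiLp 2 β) :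
    ∑ i, |‖u i‖ ^ 2 - ‖v i‖ ^ 2| ≤ (‖u‖ + ‖v‖) * ‖u - v‖ := by
  have hcoord : ∀ i, |‖u i‖ ^ 2 - ‖v i‖ ^ 2| ≤ (‖u i‖ + ‖v i‖) * ‖(u - v) i‖ := fun i => by
    rw [sq_sub_sq, abs_mul, abs_of_nonneg (by positivity), sub_apply]
    gcongr
    exact abs_norm_sub_norm_le _ _
  calc ∑ i, |‖u i‖ ^ 2 - ‖v i‖ ^ 2|
      ≤ ∑ i, ‖u i‖ * ‖(u - v) i‖ + ∑ i, ‖v i‖ * ‖(u - v) i‖ := by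
        rw [← sum_add_distrib]
        exact sum_le_sum fun i _ => (hcoord i).trans_eq (add_mul _ _ _)
    _ ≤ ‖u‖ * ‖u - v‖ + ‖v‖ * ‖u - v‖ :=
        add_le_add (sum_norm_mul_norm_le u _) (sum_norm_mul_norm_le v _)
    _ = (‖u‖ + ‖v‖) * ‖u - v‖ := (add_mul _ _ _).symm

theorem norm_normalize_apply_sq [∀ i, NormedAddCommGroup (β i)]
    [∀ i, NormedSpace ℝ (β i)] (u : PiLp 2 β) (i : ι) :
    ‖NormedSpace.normalize u i‖ ^ 2 = ‖u i‖ ^ 2 / ‖u‖ ^ 2 := by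
  rw [NormedSpace.normalize, smul_apply, norm_smul, Real.norm_eq_abs, abs_inv, abs_norm,
    mul_pow, inv_pow, inv_mul_eq_div]

end PiLp

theorem enorm'_eq_norm_toLp {n : ℕ} (x : Fin n → ℂ) :
    enorm' x = ‖(WithLp.toLp 2 x : EuclideanSpace ℂ (Fin n))‖ := by
  rw [PiLp.norm_eq_of_L2]; rfl

theorem stmt3_general {n : ℕ} (x y : Fin n → ℂ) (hx : x ≠ 0)
    (ε : ℝ) (hxy : enorm' (x - y) ≤ ε) :
    (1 / 2) * ∑ i, |‖x i‖ ^ 2 / (enorm' x) ^ 2 - ‖y i‖ ^ 2 / (enorm' y) ^ 2|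
      ≤ 2 * ε / enorm' x := by
  set x' : EuclideanSpace ℂ (Fin n) := WithLp.toLp 2 x
  set y' : EuclideanSpace ℂ (Fin n) := WithLp.toLp 2 y
  set u := NormedSpace.normalize x'
  set v := NormedSpace.normalize y'
  have hx' : x' ≠ 0 := fun h => hx (congrArg WithLp.ofLp h)
  have hsum : ∑ i, |‖x i‖ ^ 2 / (enorm' x) ^ 2 - ‖y i‖ ^ 2 / (enorm' y) ^ 2|
      = ∑ i, |‖u i‖ ^ 2 - ‖v i‖ ^ 2| := by
    simp only [u, v, PiLp.norm_normalize_apply_sq, enorm'_eq_norm_toLp]; rfl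
  rw [hsum, enorm'_eq_norm_toLp]
  calc (1 / 2) * ∑ i, |‖u i‖ ^ 2 - ‖v i‖ ^ 2|
      ≤ (1 / 2) * ((‖u‖ + ‖v‖) * ‖u - v‖) := by
        gcongr; exact PiLp.sum_abs_norm_sq_sub_norm_sq_le u v
    _ ≤ (1 / 2) * ((1 + 1) * ‖u - v‖) := by
        gcongr <;> exact NormedSpace.norm_normalize_le_one _
    _ = ‖u - v‖ := by ring
    _ ≤ 2 * ‖x' - y'‖ / ‖x'‖ := NormedSpace.norm_normalize_sub_normalize_le hx' y'
    _ ≤ 2 * ε / ‖x'‖ := by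
        gcongr
        exact (enorm'_eq_norm_toLp (x - y)).symm.le.trans hxy

theorem stmt3 {n : ℕ} (x y : Fin n → ℂ) (hx : x ≠ 0) (hy : y ≠ 0)
    (ε : ℝ) (hxy : enorm' (x - y) ≤ ε) :
    (1 / 2) * ∑ i, |‖x i‖ ^ 2 / (enorm' x) ^ 2 - ‖y i‖ ^ 2 / (enorm' y) ^ 2|
      ≤ 2 * ε / enorm' x :=
  stmt3_general x y hx ε hxy
end

section
/- Let X, Y ∈ C^{n×n} be Hermitian matrices and let Δ = X − Y have orthonormal eigenbasis v_1,…,v_n with eigenvalues λ_1,…,λ_n. Then ||X² − Y²||_F² ≥ ∑_{i=1}^n λ_i²·|v_i†(X + Y)v_i|². -/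
open Matrix Finset
open scoped ComplexOrder

/-!
Write `M = X² - Y² = YΔ + ΔX`. Since `Δ` is Hermitian, `vᵢ` is also a left eigenvector of `Δ`
with the real eigenvalue `λᵢ`, so `vᵢ† M vᵢ = λᵢ · vᵢ† (X + Y) vᵢ`. It remains to bound
`∑ |vᵢ† M vᵢ|² ≤ ∑ ‖M vᵢ‖² ≤ ‖M‖_F²`: the first step is Cauchy–Schwarz, the second is Bessel's
inequality for the orthonormal family `(vᵢ)` applied to each row of `M`.
-/

section Bessel

variable {𝕜 ι m n : Type*} [RCLike 𝕜] [Fintype ι] [Fintype m] [Fintype n]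

omit [Fintype ι] in
lemma orthonormal_toLp_of_star_dotProduct {v : ι → n → 𝕜}
    (hunit : ∀ i, star (v i) ⬝ᵥ v i = 1) (horth : ∀ i j, i ≠ j → star (v i) ⬝ᵥ v j = 0) :
    Orthonormal 𝕜 (fun i ↦ WithLp.toLp 2 (v i)) := by
  classical
  rw [orthonormal_iff_ite]
  intro i j
  rw [EuclideanSpace.inner_toLp_toLp, dotProduct_comm]
  split_ifs with h
  · exact h ▸ hunit i
  · exact horth i j h

lemma sum_norm_sq_mulVec_le_of_orthonormal (M : Matrix m n 𝕜) {v : ι → n → 𝕜}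
    (hv : Orthonormal 𝕜 (fun i ↦ WithLp.toLp 2 (v i))) :
    ∑ i, ‖WithLp.toLp 2 (M *ᵥ v i)‖ ^ 2 ≤ ∑ k, ∑ j, ‖M k j‖ ^ 2 := by
  simp_rw [EuclideanSpace.norm_sq_eq]
  rw [Finset.sum_comm]
  refine Finset.sum_le_sum fun k _ ↦ ?_
  have hrow : ∀ i, (M *ᵥ v i) k = inner 𝕜 (WithLp.toLp 2 (star (M k))) (WithLp.toLp 2 (v i)) := by
    intro i
    rw [EuclideanSpace.inner_toLp_toLp, star_star, dotProduct_comm]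
    rfl
  calc ∑ i, ‖(WithLp.toLp 2 (M *ᵥ v i)) k‖ ^ 2
      = ∑ i, ‖inner 𝕜 (WithLp.toLp 2 (v i)) (WithLp.toLp 2 (star (M k)))‖ ^ 2 := by
        simp only [hrow, norm_inner_symm]
    _ ≤ ‖WithLp.toLp 2 (star (M k))‖ ^ 2 := hv.sum_inner_products_le _
    _ = ∑ j, ‖M k j‖ ^ 2 := by simp [EuclideanSpace.norm_sq_eq]

lemma sum_norm_sq_star_dotProduct_mulVec_le_of_orthonormal (M : Matrix n n 𝕜) {v : ι → n → 𝕜}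
    (hv : Orthonormal 𝕜 (fun i ↦ WithLp.toLp 2 (v i))) :
    ∑ i, ‖star (v i) ⬝ᵥ (M *ᵥ v i)‖ ^ 2 ≤ ∑ k, ∑ j, ‖M k j‖ ^ 2 := by
  refine le_trans (Finset.sum_le_sum fun i _ ↦ ?_) (sum_norm_sq_mulVec_le_of_orthonormal M hv)
  have hcs : ‖star (v i) ⬝ᵥ (M *ᵥ v i)‖ ≤ ‖WithLp.toLp 2 (M *ᵥ v i)‖ := by
    rw [dotProduct_comm, ← EuclideanSpace.inner_toLp_toLp]
    simpa [hv.1 i] using norm_inner_le_norm (𝕜 := 𝕜) (WithLp.toLp 2 (v i)) (WithLp.toLp 2 (M *ᵥ v i))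
  gcongr

end Bessel

lemma star_dotProduct_mulVec_mul_add_mul_of_mulVec_eq_smul {R n : Type*} [Fintype n]
    [CommRing R] [StarRing R] {Δ : Matrix n n R} (hΔ : Δ.IsHermitian) (X Y : Matrix n n R)
    {v : n → R} {μ : R} (hμ : star μ = μ) (hv : Δ *ᵥ v = μ • v) :
    star v ⬝ᵥ ((Y * Δ + Δ * X) *ᵥ v) = μ * (star v ⬝ᵥ ((X + Y) *ᵥ v)) := by
  have hleft : star v ᵥ* Δ = μ • star v := by
    rw [← hΔ.eq, ← star_mulVec, hv, star_smul, hμ]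
  rw [add_mulVec, dotProduct_add, ← mulVec_mulVec, hv, mulVec_smul, dotProduct_smul,
    ← mulVec_mulVec, dotProduct_mulVec _ Δ, hleft, smul_dotProduct, add_mulVec, dotProduct_add,
    smul_eq_mul, smul_eq_mul]
  ring

theorem stmt7 {n : ℕ} (X Y Δ : Matrix (Fin n) (Fin n) ℂ)
    (hX : X.IsHermitian) (hY : Y.IsHermitian) (hΔ : Δ = X - Y)
    (lam : Fin n → ℝ) (v : Fin n → Fin n → ℂ)
    (hunit : ∀ i, star (v i) ⬝ᵥ v i = 1)
    (horth : ∀ i j, i ≠ j → star (v i) ⬝ᵥ v j = 0)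
    (heig : ∀ i, Δ.mulVec (v i) = (lam i : ℂ) • v i) :
    ∑ i, (lam i) ^ 2 * ‖star (v i) ⬝ᵥ ((X + Y).mulVec (v i))‖ ^ 2
      ≤ (frob (X * X - Y * Y)) ^ 2 := by
  have hsq : X * X - Y * Y = Y * Δ + Δ * X := by rw [hΔ]; noncomm_ring
  have hΔherm : Δ.IsHermitian := hΔ ▸ hX.sub hY
  calc ∑ i, lam i ^ 2 * ‖star (v i) ⬝ᵥ ((X + Y) *ᵥ v i)‖ ^ 2
      = ∑ i, ‖star (v i) ⬝ᵥ ((X * X - Y * Y) *ᵥ v i)‖ ^ 2 := by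
        refine Finset.sum_congr rfl fun i _ ↦ ?_
        rw [hsq, star_dotProduct_mulVec_mul_add_mul_of_mulVec_eq_smul hΔherm X Y
          (Complex.conj_ofReal _) (heig i), norm_mul, mul_pow, Complex.norm_real,
          Real.norm_eq_abs, sq_abs]
    _ ≤ ∑ i, ∑ j, ‖(X * X - Y * Y) i j‖ ^ 2 :=
        sum_norm_sq_star_dotProduct_mulVec_le_of_orthonormal _
          (orthonormal_toLp_of_star_dotProduct hunit horth)
    _ = frob (X * X - Y * Y) ^ 2 := (frob_sq _).symm
end

section
/- Let M ∈ C^{m×n} and let i_1,…,i_p be independent row indices each sampled with probability P_i = ||M(i,·)||²/||M||_F². Let N ∈ C^{p×n} have rows N(t,·) = M(i_t,·)/√(p·P_{i_t}). Then E[N†N] = M†M, and for all θ > 0, Pr[||M†M − N†N||_F ≥ θ·||M||_F²] ≤ 1/(θ²p). -/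
open Matrix Finset
open scoped ComplexOrder

open scoped Classical

/-!
A draw `f : Fin p → Fin m` has probability `∏ t, P (f t)`, and `(N f)ᴴ * N f` is the sample mean
of the i.i.d. matrices `Y (f t)`, where `Y i = (P i)⁻¹ • (M i)ᴴ (M i)`. Each `Y i` has Frobenius
norm `‖M‖_F²` and mean `∑ i, P i • Y i = Mᴴ * M`. Independence kills the cross terms in the second
moment of the sample mean, so the expected squared Frobenius distance to `Mᴴ * M` is the variance
of one `Y i` divided by `p`, hence at most `‖M‖_F⁴ / p`; Chebyshev's inequality concludes.
-/

namespace Matrix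

theorem conjTranspose_mul_self_eq_sum_vecMulVec {l n α : Type*} [Fintype l] [NonUnitalSemiring α]
    [StarRing α] (A : Matrix l n α) : Aᴴ * A = ∑ i, vecMulVec (star (A i)) (A i) := by
  ext j k
  simp [mul_apply, vecMulVec_apply, sum_apply]

def toEuclideanFlat {m n : Type*} : Matrix m n ℂ →ₗ[ℝ] EuclideanSpace ℂ (m × n) where
  toFun A := WithLp.toLp 2 fun x => A x.1 x.2
  map_add' _ _ := rfl
  map_smul' _ _ := rfl

end Matrix

theorem frob_eq_norm_toEuclideanFlat {m n : ℕ} (A : Matrix (Fin m) (Fin n) ℂ) :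
    frob A = ‖A.toEuclideanFlat‖ := by
  rw [frob, EuclideanSpace.norm_eq, Fintype.sum_prod_type]
  rfl

theorem frob_smul {m n : ℕ} (r : ℝ) (A : Matrix (Fin m) (Fin n) ℂ) :
    frob (r • A) = |r| * frob A := by
  simp_rw [frob_eq_norm_toEuclideanFlat, map_smul, norm_smul, Real.norm_eq_abs]

theorem frob_vecMulVec_star_self {n : ℕ} (v : Fin n → ℂ) :
    frob (vecMulVec (star v) v) = ∑ j, ‖v j‖ ^ 2 := by
  rw [frob, ← Real.sqrt_sq (sum_nonneg fun j _ => sq_nonneg ‖v j‖), sq, sum_mul_sum]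
  simp [vecMulVec_apply, mul_pow]

theorem sq_mul_sum_filter_le_sum_mul_sq {α : Type*} (s : Finset α) (W g : α → ℝ)
    (hW : ∀ x ∈ s, 0 ≤ W x) {a : ℝ} (ha : 0 ≤ a) :
    a ^ 2 * ∑ x ∈ s with a ≤ g x, W x ≤ ∑ x ∈ s, W x * g x ^ 2 := by
  rw [mul_sum]
  calc ∑ x ∈ s with a ≤ g x, a ^ 2 * W x
      ≤ ∑ x ∈ s with a ≤ g x, W x * g x ^ 2 := by
        refine sum_le_sum fun x hx => ?_
        rw [mem_filter] at hx
        rw [mul_comm]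
        exact mul_le_mul_of_nonneg_left (pow_le_pow_left₀ ha hx.2 2) (hW x hx.1)
    _ ≤ ∑ x ∈ s, W x * g x ^ 2 :=
        sum_le_sum_of_subset_of_nonneg (filter_subset _ _) fun x hx _ =>
          mul_nonneg (hW x hx) (sq_nonneg _)

section IIDSampling

/-! A map `f : σ → ι` is a sample of size `card σ` drawn i.i.d. from the weights `w`; it has
weight `∏ t, w (f t)`. -/

variable {σ ι : Type*} [Fintype σ] [DecidableEq σ] [Fintype ι]

theorem sum_prod_weight_mul_prod {R : Type*} [CommSemiring R] (w : ι → R) (hw : ∑ i, w i = 1)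
    (S : Finset σ) (h : σ → ι → R) :
    ∑ f : σ → ι, (∏ t, w (f t)) * ∏ t ∈ S, h t (f t) = ∏ t ∈ S, ∑ i, w i * h t i := by
  calc ∑ f : σ → ι, (∏ t, w (f t)) * ∏ t ∈ S, h t (f t)
      = ∑ f : σ → ι, ∏ t, w (f t) * (if t ∈ S then h t (f t) else 1) := by
        simp_rw [prod_mul_distrib, prod_ite_mem, univ_inter]
    _ = ∏ t, ∑ i, w i * (if t ∈ S then h t i else 1) :=
        (Fintype.prod_sum fun t i => w i * (if t ∈ S then h t i else 1)).symm
    _ = ∏ t, if t ∈ S then ∑ i, w i * h t i else 1 :=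
        prod_congr rfl fun t _ => by split_ifs <;> simp [hw]
    _ = ∏ t ∈ S, ∑ i, w i * h t i := by rw [prod_ite_mem, univ_inter]

variable {R : Type*} [CommSemiring R]

theorem sum_prod_weight_mul_apply (w : ι → R) (hw : ∑ i, w i = 1) (s : σ) (h : ι → R) :
    ∑ f : σ → ι, (∏ t, w (f t)) * h (f s) = ∑ i, w i * h i := by
  simpa using sum_prod_weight_mul_prod w hw {s} fun _ => h

theorem sum_prod_weight_mul_apply₂ (w : ι → R) (hw : ∑ i, w i = 1) {s t : σ} (hst : s ≠ t)
    (h : ι → ι → R) :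
    ∑ f : σ → ι, (∏ r, w (f r)) * h (f s) (f t) = ∑ i, ∑ j, w i * w j * h i j := by
  have hmarg : ∀ i j, ∑ f : σ → ι, (∏ r, w (f r)) *
      ((if f s = i then 1 else 0) * (if f t = j then 1 else 0)) = w i * w j := by
    intro i j
    simpa [prod_pair hst, hst.symm] using sum_prod_weight_mul_prod w hw {s, t}
      fun r k => if k = (if r = s then i else j) then 1 else 0
  calc ∑ f : σ → ι, (∏ r, w (f r)) * h (f s) (f t)
      = ∑ f : σ → ι, ∑ i, ∑ j, (∏ r, w (f r)) *
          ((if f s = i then 1 else 0) * (if f t = j then 1 else 0)) * h i j := by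
        simp [ite_mul, mul_ite]
    _ = ∑ i, ∑ j, w i * w j * h i j := by
        rw [sum_comm]
        refine sum_congr rfl fun i _ => ?_
        rw [sum_comm]
        simp_rw [← sum_mul, hmarg]

theorem sum_prod_weight_smul_apply {E : Type*} [AddCommMonoid E] [Module R E] (w : ι → R)
    (hw : ∑ i, w i = 1) (s : σ) (Y : ι → E) :
    ∑ f : σ → ι, (∏ t, w (f t)) • Y (f s) = ∑ i, w i • Y i := by
  have hmarg : ∀ i, ∑ f : σ → ι, (∏ t, w (f t)) * (if f s = i then 1 else 0) = w i := fun i => by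
    simpa using sum_prod_weight_mul_apply w hw s fun k => if k = i then 1 else 0
  calc ∑ f : σ → ι, (∏ t, w (f t)) • Y (f s)
      = ∑ f : σ → ι, ∑ i, ((∏ t, w (f t)) * (if f s = i then 1 else 0)) • Y i := by
        simp [mul_ite, ite_smul]
    _ = ∑ i, w i • Y i := by
        rw [sum_comm]
        simp_rw [← sum_smul, hmarg]

noncomputable def sampleMean {E : Type*} [AddCommGroup E] [Module ℝ E] (Y : ι → E)
    (f : σ → ι) : E :=
  (Fintype.card σ : ℝ)⁻¹ • ∑ t, Y (f t)

theorem sum_prod_weight_smul_sampleMean [Nonempty σ] {E : Type*} [AddCommGroup E] [Module ℝ E]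
    (w : ι → ℝ) (hw : ∑ i, w i = 1) (Y : ι → E) :
    ∑ f : σ → ι, (∏ t, w (f t)) • sampleMean Y f = ∑ i, w i • Y i := by
  have hcard : (Fintype.card σ : ℝ) ≠ 0 := Nat.cast_ne_zero.mpr Fintype.card_ne_zero
  calc ∑ f : σ → ι, (∏ t, w (f t)) • sampleMean Y f
      = (Fintype.card σ : ℝ)⁻¹ • ∑ t, ∑ f : σ → ι, (∏ r, w (f r)) • Y (f t) := by
        simp_rw [sampleMean, smul_sum, smul_comm _ (Fintype.card σ : ℝ)⁻¹]
        rw [sum_comm]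
    _ = ∑ i, w i • Y i := by
        simp_rw [sum_prod_weight_smul_apply w hw]
        rw [sum_const, card_univ, ← Nat.cast_smul_eq_nsmul ℝ, smul_smul, inv_mul_cancel₀ hcard,
          one_smul]

section InnerProductSpace

open scoped RealInnerProductSpace

variable {E : Type*} [NormedAddCommGroup E] [InnerProductSpace ℝ E]

theorem sum_prod_weight_mul_norm_sum_sq (w : ι → ℝ) (hw : ∑ i, w i = 1) (Z : ι → E)
    (hZ : ∑ i, w i • Z i = 0) :
    ∑ f : σ → ι, (∏ t, w (f t)) * ‖∑ t, Z (f t)‖ ^ 2 = Fintype.card σ * ∑ i, w i * ‖Z i‖ ^ 2 := by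
  have hpair : ∀ s t : σ, ∑ f : σ → ι, (∏ r, w (f r)) * ⟪Z (f s), Z (f t)⟫
      = if s = t then ∑ i, w i * ‖Z i‖ ^ 2 else 0 := by
    intro s t
    split_ifs with hst
    · subst hst
      simp_rw [real_inner_self_eq_norm_sq]
      exact sum_prod_weight_mul_apply w hw s fun i => ‖Z i‖ ^ 2
    · calc ∑ f : σ → ι, (∏ r, w (f r)) * ⟪Z (f s), Z (f t)⟫
          = ⟪∑ i, w i • Z i, ∑ j, w j • Z j⟫ := by
            rw [sum_prod_weight_mul_apply₂ w hw hst fun i j => ⟪Z i, Z j⟫]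
            simp_rw [sum_inner, inner_sum, real_inner_smul_left, real_inner_smul_right,
              mul_assoc]
        _ = 0 := by rw [hZ, inner_zero_left]
  calc ∑ f : σ → ι, (∏ t, w (f t)) * ‖∑ t, Z (f t)‖ ^ 2
      = ∑ s, ∑ t, ∑ f : σ → ι, (∏ r, w (f r)) * ⟪Z (f s), Z (f t)⟫ := by
        simp_rw [← real_inner_self_eq_norm_sq, sum_inner, inner_sum, mul_sum]
        rw [sum_comm]
        exact sum_congr rfl fun _ _ => sum_comm
    _ = Fintype.card σ * ∑ i, w i * ‖Z i‖ ^ 2 := by simp [hpair]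

theorem sum_prod_weight_mul_norm_sampleMean_sub_sq [Nonempty σ] (w : ι → ℝ) (hw : ∑ i, w i = 1)
    (Y : ι → E) :
    ∑ f : σ → ι, (∏ t, w (f t)) * ‖sampleMean Y f - ∑ i, w i • Y i‖ ^ 2
      = (∑ i, w i * ‖Y i - ∑ j, w j • Y j‖ ^ 2) / Fintype.card σ := by
  set μ := ∑ i, w i • Y i
  have hcard : (Fintype.card σ : ℝ) ≠ 0 := Nat.cast_ne_zero.mpr Fintype.card_ne_zero
  have hcentre : ∀ f : σ → ι,
      sampleMean Y f - μ = (Fintype.card σ : ℝ)⁻¹ • ∑ t, (Y (f t) - μ) := fun f => by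
    rw [sampleMean, sum_sub_distrib, smul_sub, sum_const, card_univ, ← Nat.cast_smul_eq_nsmul ℝ,
      smul_smul, inv_mul_cancel₀ hcard, one_smul]
  have hZ : ∑ i, w i • (Y i - μ) = 0 := by
    simp_rw [smul_sub, sum_sub_distrib, ← sum_smul, hw, one_smul]
    exact sub_self μ
  simp_rw [hcentre, norm_smul, mul_pow, mul_left_comm _ (‖_‖ ^ 2), ← mul_sum,
    sum_prod_weight_mul_norm_sum_sq w hw _ hZ, norm_inv, RCLike.norm_natCast]
  field_simp

theorem sum_mul_norm_sub_sq_le (w : ι → ℝ) (hw : ∑ i, w i = 1) (Y : ι → E) :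
    ∑ i, w i * ‖Y i - ∑ j, w j • Y j‖ ^ 2 ≤ ∑ i, w i * ‖Y i‖ ^ 2 := by
  set μ := ∑ i, w i • Y i
  have hexpand : ∑ i, w i * ‖Y i - μ‖ ^ 2 = ∑ i, w i * ‖Y i‖ ^ 2 - ‖μ‖ ^ 2 := by
    have hcross : ∑ i, w i * (2 * ⟪Y i, μ⟫) = 2 * ‖μ‖ ^ 2 := by
      simp_rw [mul_left_comm _ (2 : ℝ), ← mul_sum, ← real_inner_smul_left, ← sum_inner]
      exact congrArg (2 * ·) (real_inner_self_eq_norm_sq μ)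
    simp_rw [norm_sub_sq_real, mul_add, mul_sub, sum_add_distrib, sum_sub_distrib, hcross,
      ← sum_mul, hw]
    ring
  rw [hexpand]
  exact sub_le_self _ (sq_nonneg _)

end InnerProductSpace

theorem sum_prod_weight_mul_frob_sub_sampleMean_sq_le [Nonempty σ] {a b : ℕ} (w : ι → ℝ)
    (hw : ∑ i, w i = 1) (Y : ι → Matrix (Fin a) (Fin b) ℂ) :
    ∑ f : σ → ι, (∏ t, w (f t)) * frob (∑ i, w i • Y i - sampleMean Y f) ^ 2
      ≤ (∑ i, w i * frob (Y i) ^ 2) / Fintype.card σ := by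
  set Z : ι → EuclideanSpace ℂ (Fin a × Fin b) := fun i => (Y i).toEuclideanFlat
  have hflat : ∀ f : σ → ι, (∑ i, w i • Y i - sampleMean Y f).toEuclideanFlat
      = -(sampleMean Z f - ∑ i, w i • Z i) := fun f => by
    simp [Z, sampleMean, map_sum]
  simp_rw [frob_eq_norm_toEuclideanFlat, hflat, norm_neg,
    sum_prod_weight_mul_norm_sampleMean_sub_sq w hw Z]
  exact div_le_div_of_nonneg_right (sum_mul_norm_sub_sq_le w hw Z) (Nat.cast_nonneg _)

theorem sum_filter_le_frob_sub_sampleMean_le [Nonempty σ] {a b : ℕ} (w : ι → ℝ)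
    (hw : ∑ i, w i = 1) (hw₀ : ∀ i, 0 ≤ w i) (Y : ι → Matrix (Fin a) (Fin b) ℂ) {δ : ℝ}
    (hδ : 0 < δ) :
    ∑ f ∈ (univ : Finset (σ → ι)) with δ ≤ frob (∑ i, w i • Y i - sampleMean Y f), ∏ t, w (f t)
      ≤ (∑ i, w i * frob (Y i) ^ 2) / (Fintype.card σ * δ ^ 2) := by
  rw [← div_div, le_div_iff₀ (by positivity), mul_comm]
  exact (sq_mul_sum_filter_le_sum_mul_sq _ _ _ (fun f _ => prod_nonneg fun t _ => hw₀ _)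
    hδ.le).trans (sum_prod_weight_mul_frob_sub_sampleMean_sq_le (σ := σ) w hw Y)

end IIDSampling

theorem conjTranspose_mul_self_of_rows_div_sqrt {m n p : ℕ} (M : Matrix (Fin m) (Fin n) ℂ)
    (q : Fin m → ℝ) (hq : ∀ i, 0 < q i) (f : Fin p → Fin m) :
    (of fun t j => M (f t) j / ((√(p * q (f t)) : ℝ) : ℂ))ᴴ *
        (of fun t j => M (f t) j / ((√(p * q (f t)) : ℝ) : ℂ))
      = sampleMean (fun i => (q i)⁻¹ • vecMulVec (star (M i)) (M i)) f := by
  rw [conjTranspose_mul_self_eq_sum_vecMulVec, sampleMean, Fintype.card_fin, smul_sum]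
  refine sum_congr rfl fun t _ => ?_
  have hsq : ((√(p * q (f t)) : ℝ) : ℂ) * ((√(p * q (f t)) : ℝ) : ℂ)
      = (p : ℂ) * (q (f t) : ℂ) := by
    rw [← Complex.ofReal_mul, Real.mul_self_sqrt (mul_nonneg p.cast_nonneg (hq _).le)]
    push_cast
    rfl
  ext j k
  simp only [of_apply, vecMulVec_apply, Matrix.smul_apply, Pi.star_apply, star_div₀,
    Complex.star_def, Complex.conj_ofReal, div_mul_div_comm, hsq, Complex.real_smul]
  push_cast
  field_simp

theorem stmt10 {m n p : ℕ} (hp : 0 < p) (M : Matrix (Fin m) (Fin n) ℂ)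
    (hrow : ∀ i, ∃ j, M i j ≠ 0) (θ : ℝ) (hθ : 0 < θ) :
    let F2 : ℝ := ∑ i, ∑ j, ‖M i j‖ ^ 2
    let P : Fin m → ℝ := fun i => (∑ j, ‖M i j‖ ^ 2) / F2
    let N : (Fin p → Fin m) → Matrix (Fin p) (Fin n) ℂ :=
      fun f t j => M (f t) j / ((Real.sqrt (p * P (f t)) : ℝ) : ℂ)
    (∑ f : Fin p → Fin m, (∏ t, P (f t)) • ((N f)ᴴ * N f) = Mᴴ * M) ∧
    (∑ f ∈ Finset.univ.filter
        (fun f : Fin p → Fin m => θ * F2 ≤ frob (Mᴴ * M - (N f)ᴴ * N f)),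
        ∏ t, P (f t)) ≤ 1 / (θ ^ 2 * p) := by
  intro F2 P N
  have : Nonempty (Fin p) := ⟨⟨0, hp⟩⟩
  rcases isEmpty_or_nonempty (Fin m) with hm | hm
  · exact ⟨by ext j k; simp [mul_apply], by simp; positivity⟩
  have hrowsq : ∀ i, 0 < ∑ j, ‖M i j‖ ^ 2 := fun i =>
    let ⟨j, hj⟩ := hrow i
    sum_pos' (fun j _ => by positivity) ⟨j, mem_univ j, by positivity⟩
  have hF2 : 0 < F2 := sum_pos (fun i _ => hrowsq i) univ_nonempty
  have hP : ∀ i, 0 < P i := fun i => div_pos (hrowsq i) hF2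
  have hPsum : ∑ i, P i = 1 := by rw [← sum_div, div_self hF2.ne']
  set Y : Fin m → Matrix (Fin n) (Fin n) ℂ := fun i => (P i)⁻¹ • vecMulVec (star (M i)) (M i)
  have hmean : ∑ i, P i • Y i = Mᴴ * M := by
    simp_rw [Y, smul_smul, mul_inv_cancel₀ (hP _).ne', one_smul,
      conjTranspose_mul_self_eq_sum_vecMulVec]
  have hfrobY : ∀ i, frob (Y i) = F2 := fun i => by
    rw [frob_smul, frob_vecMulVec_star_self, abs_inv, abs_of_pos (hP i), inv_mul_eq_div,
      div_div_cancel₀ (hrowsq i).ne']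
  simp_rw [fun f => show (N f)ᴴ * N f = sampleMean Y f from
    conjTranspose_mul_self_of_rows_div_sqrt M P hP f, ← hmean]
  refine ⟨sum_prod_weight_smul_sampleMean P hPsum Y, ?_⟩
  calc _ ≤ (∑ i, P i * frob (Y i) ^ 2) / (Fintype.card (Fin p) * (θ * F2) ^ 2) :=
        sum_filter_le_frob_sub_sampleMean_le P hPsum (fun i => (hP i).le) Y (by positivity)
    _ = 1 / (θ ^ 2 * p) := by
        simp_rw [hfrobY, ← sum_mul, hPsum, Fintype.card_fin]
        field_simp
end
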